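/- Let N be a positive integer and θ_1, …, θ_N real numbers. Define the real symmetric N×N matrix A by A_{jk} = ∑_{l=0}^{N−1} cos((l − (N−1)/2)(θ_j − θ_k)); whenever sin((θ_j − θ_k)/2) ≠ 0 this entry equals sin(N(θ_j − θ_k)/2)/sin((θ_j − θ_k)/2), and A_{jj} = N. Then det A = ∏_{1≤j<k≤N} |e^{iθ_j} − e^{iθ_k}|². -/

import Mathlib

/-!
Write the entries as `A_{jk} = ∑_l e^{i(l-c)θ_j} · conj (e^{i(l-c)θ_k})` with `c = (N-1)/2`: the sine
parts cancel under the reflection `l ↦ N-1-l`. Hence `A = B Bᴴ` for `B_{jl} = e^{i(l-c)θ_j}`, and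
`B` is a diagonal matrix of unimodular entries times the Vandermonde matrix of the `e^{iθ_j}`, so
`det A = |det B|² = ∏_{j<k} |e^{iθ_j} - e^{iθ_k}|²`.
-/

open Real Complex Finset
open scoped Matrix ComplexConjugate

theorem Finset.prod_filter_fst_lt_eq_prod_prod_Ioi {α M : Type*} [Fintype α] [LinearOrder α]
    [LocallyFiniteOrderTop α] [CommMonoid M] (f : α × α → M) :
    ∏ p ∈ univ.filter (fun p : α × α => p.1 < p.2), f p = ∏ i, ∏ j ∈ Ioi i, f (i, j) := by
  rw [prod_filter, Fintype.prod_prod_type]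
  refine prod_congr rfl fun i _ => ?_
  rw [← prod_filter]
  congr 1
  ext j
  simp

theorem Matrix.det_eq_norm_sq_of_map_ofReal_eq_mul_conjTranspose {n : Type*} [Fintype n]
    [DecidableEq n] {A : Matrix n n ℝ} {B : Matrix n n ℂ}
    (h : A.map ((↑) : ℝ → ℂ) = B * Bᴴ) : A.det = ‖B.det‖ ^ 2 := by
  have hdet : ((A.det : ℝ) : ℂ) = (A.map ((↑) : ℝ → ℂ)).det := Complex.ofRealHom.map_det A
  rw [h, det_mul, det_conjTranspose, RCLike.star_def, Complex.mul_conj] at hdet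
  rw [Complex.sq_norm]
  exact_mod_cast hdet

theorem sum_range_sin_centered_mul_eq_zero (N : ℕ) (d : ℝ) :
    ∑ l ∈ range N, Real.sin (((l : ℝ) - ((N : ℝ) - 1) / 2) * d) = 0 := by
  have hreflect := sum_range_reflect (fun l : ℕ => Real.sin (((l : ℝ) - ((N : ℝ) - 1) / 2) * d)) N
  have hodd : ∀ l ∈ range N, Real.sin ((((N - 1 - l : ℕ) : ℝ) - ((N : ℝ) - 1) / 2) * d)
      = -Real.sin (((l : ℝ) - ((N : ℝ) - 1) / 2) * d) := by
    intro l hl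
    have hl' : 1 + l ≤ N := by have := mem_range.mp hl; omega
    rw [Nat.sub_sub, Nat.cast_sub hl', ← Real.sin_neg]
    push_cast
    ring_nf
  rw [sum_congr rfl hodd, sum_neg_distrib] at hreflect
  linarith

noncomputable def centeredFourierMatrix {ι : Type*} (N : ℕ) (θ : ι → ℝ) : Matrix ι (Fin N) ℂ :=
  Matrix.of fun j l => Complex.exp (((((l : ℕ) : ℝ) - ((N : ℝ) - 1) / 2) * θ j : ℝ) * I)

theorem exp_ofReal_mul_I_mul_conj (x y : ℝ) :
    Complex.exp (x * I) * conj (Complex.exp (y * I)) = Complex.exp ((x - y : ℝ) * I) := by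
  rw [← Complex.exp_conj, ← Complex.exp_add]
  congr 1
  simp only [map_mul, Complex.conj_ofReal, Complex.conj_I, Complex.ofReal_sub]
  ring

theorem sum_range_exp_centered_mul_I (N : ℕ) (d : ℝ) :
    ∑ l ∈ range N, Complex.exp ((((l : ℝ) - ((N : ℝ) - 1) / 2) * d : ℝ) * I) =
      ∑ l ∈ range N, Real.cos (((l : ℝ) - ((N : ℝ) - 1) / 2) * d) := by
  simp_rw [Complex.exp_mul_I, ← Complex.ofReal_cos, ← Complex.ofReal_sin, sum_add_distrib,
    ← sum_mul, ← Complex.ofReal_sum, sum_range_sin_centered_mul_eq_zero]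
  simp

theorem centeredFourierMatrix_mul_conjTranspose {ι : Type*} (N : ℕ) (θ : ι → ℝ) :
    centeredFourierMatrix N θ * (centeredFourierMatrix N θ)ᴴ =
      (Matrix.of fun j k => ∑ l ∈ range N,
        Real.cos (((l : ℝ) - ((N : ℝ) - 1) / 2) * (θ j - θ k))).map ((↑) : ℝ → ℂ) := by
  ext j k
  simp only [Matrix.mul_apply, Matrix.conjTranspose_apply, centeredFourierMatrix, Matrix.of_apply,
    Matrix.map_apply, RCLike.star_def, exp_ofReal_mul_I_mul_conj, ← mul_sub]
  rw [Fin.sum_univ_eq_sum_range (fun l : ℕ =>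
      Complex.exp ((((l : ℝ) - ((N : ℝ) - 1) / 2) * (θ j - θ k) : ℝ) * I)),
    sum_range_exp_centered_mul_I, Complex.ofReal_sum]

theorem centeredFourierMatrix_eq_diagonal_mul_vandermonde (N : ℕ) (θ : Fin N → ℝ) :
    centeredFourierMatrix N θ =
      Matrix.diagonal (fun j => Complex.exp ((-((N - 1) / 2 * θ j) : ℝ) * I)) *
        Matrix.vandermonde (fun j => Complex.exp (θ j * I)) := by
  ext j l
  rw [Matrix.diagonal_mul, centeredFourierMatrix, Matrix.of_apply, Matrix.vandermonde_apply,
    ← Complex.exp_nat_mul, ← Complex.exp_add]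
  congr 1
  push_cast
  ring

theorem norm_det_centeredFourierMatrix (N : ℕ) (θ : Fin N → ℝ) :
    ‖(centeredFourierMatrix N θ).det‖ =
      ∏ i, ∏ j ∈ Ioi i, ‖Complex.exp (θ i * I) - Complex.exp (θ j * I)‖ := by
  rw [centeredFourierMatrix_eq_diagonal_mul_vandermonde, Matrix.det_mul, Matrix.det_diagonal,
    Matrix.det_vandermonde, norm_mul, norm_prod, norm_prod]
  simp_rw [Complex.norm_exp_ofReal_mul_I, prod_const_one, one_mul, norm_prod, norm_sub_rev]

theorem det_circular_kernel_eq_prod_abs_sq (N : ℕ) (θ : Fin N → ℝ) :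
    (Matrix.of fun j k : Fin N =>
        ∑ l ∈ Finset.range N, Real.cos (((l : ℝ) - ((N : ℝ) - 1) / 2) * (θ j - θ k))).det
    = ∏ p ∈ Finset.univ.filter (fun p : Fin N × Fin N => p.1 < p.2),
        ‖Complex.exp (θ p.1 * Complex.I) - Complex.exp (θ p.2 * Complex.I)‖ ^ 2 := by
  rw [Matrix.det_eq_norm_sq_of_map_ofReal_eq_mul_conjTranspose
      (centeredFourierMatrix_mul_conjTranspose N θ).symm,
    norm_det_centeredFourierMatrix, prod_filter_fst_lt_eq_prod_prod_Ioi]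
  simp only [prod_pow]
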